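/- Let q ≥ 1 be an integer, let (s_j)_{j=0}^∞ be a Stieltjes positive definite sequence of complex q×q matrices with associated matrix polynomials P_n, Q_n, P̂_n, Q̂_n, and let P_n^{(1)}, Q_n^{(1)}, P̂_n^{(1)}, Q̂_n^{(1)} be the corresponding polynomials built from the first Kátětov transform (s_j^{(1)})_{j=0}^∞. Then for every n ∈ ℕ and every z ∈ ℂ: P_n^{(1)}(z) = s_0^{−1} Q̂_n(z), Q_n^{(1)}(z) = Q̂_n(z) − s_0 P̂_n(z), P̂_{n−1}^{(1)}(z) = s_0^{−1} Q_n(z), and Q̂_{n−1}^{(1)}(z) = z Q_n(z) − s_0 P_n(z). -/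

import Mathlib

open Matrix
open scoped ComplexOrder

noncomputable section

/-- The space of complex `q × q` matrices. -/
abbrev Mq (q : ℕ) := Matrix (Fin q) (Fin q) ℂ

/-- The space of complex `2q × 2q` matrices, written in `q × q` blocks. -/
abbrev M2q (q : ℕ) := Matrix (Fin q ⊕ Fin q) (Fin q ⊕ Fin q) ℂ

/-- Block Hankel matrix `H_n = (s_{j+k})_{j,k=0}^n`. -/
def Hmat (q : ℕ) (s : ℕ → Mq q) (n : ℕ) :
    Matrix (Fin (n + 1) × Fin q) (Fin (n + 1) × Fin q) ℂ :=
  Matrix.of fun p r => s (p.1.1 + r.1.1) p.2 r.2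

/-- Block Hankel matrix `K_n = (s_{j+k+1})_{j,k=0}^n`. -/
def Kmat (q : ℕ) (s : ℕ → Mq q) (n : ℕ) :
    Matrix (Fin (n + 1) × Fin q) (Fin (n + 1) × Fin q) ℂ :=
  Matrix.of fun p r => s (p.1.1 + r.1.1 + 1) p.2 r.2

/-- A sequence of complex `q × q` matrices is Stieltjes positive definite if all the
block Hankel matrices `H_n` and `K_n` are positive definite (in particular Hermitian). -/
def IsStieltjesPD (q : ℕ) (s : ℕ → Mq q) : Prop :=
  ∀ n : ℕ, (Hmat q s n).PosDef ∧ (Kmat q s n).PosDef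

/-- Even Stieltjes parameters `𝔮_{2k}` (Schur complements `L_k`). -/
def qEven (q : ℕ) (s : ℕ → Mq q) : ℕ → Mq q
  | 0 => s 0
  | k + 1 =>
      s (2 * (k + 1)) -
        (Matrix.of fun (a : Fin q) (r : Fin (k + 1) × Fin q) => s (k + 1 + r.1.1) a r.2) *
          (Hmat q s k)⁻¹ *
          (Matrix.of fun (p : Fin (k + 1) × Fin q) (b : Fin q) => s (k + 1 + p.1.1) p.2 b)

/-- Odd Stieltjes parameters `𝔮_{2k+1}` (Schur complements `Λ_k`). -/
def qOdd (q : ℕ) (s : ℕ → Mq q) : ℕ → Mq q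
  | 0 => s 1
  | k + 1 =>
      s (2 * (k + 1) + 1) -
        (Matrix.of fun (a : Fin q) (r : Fin (k + 1) × Fin q) => s (k + 2 + r.1.1) a r.2) *
          (Kmat q s k)⁻¹ *
          (Matrix.of fun (p : Fin (k + 1) × Fin q) (b : Fin q) => s (k + 2 + p.1.1) p.2 b)

/-- Stieltjes parametrization `𝔮_j`. -/
def qpar (q : ℕ) (s : ℕ → Mq q) (j : ℕ) : Mq q :=
  if j % 2 = 0 then qEven q s (j / 2) else qOdd q s (j / 2)

/-- Reciprocal sequence `s^♯`. -/
def reciprocal (q : ℕ) (s : ℕ → Mq q) : ℕ → Mq q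
  | 0 => (s 0)⁻¹
  | j + 1 =>
      -(s 0)⁻¹ *
        ∑ l ∈ (Finset.range (j + 1)).attach, s (j + 1 - l.1) * reciprocal q s l.1
  decreasing_by exact Finset.mem_range.mp l.2

/-- First Kátětov transform `s^{(1)}_j = −s_0 s_{j+1}^♯ s_0`. -/
def katetov1 (q : ℕ) (s : ℕ → Mq q) : ℕ → Mq q :=
  fun j => -(s 0) * reciprocal q s (j + 1) * s 0

/-- `ℓ`-th Kátětov transform (the `ℓ`-fold iterate of the first Kátětov transform). -/
def katetov (q : ℕ) (ℓ : ℕ) (s : ℕ → Mq q) : ℕ → Mq q :=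
  (katetov1 q)^[ℓ] s

/-- `v_k = col(I_q, 0_{kq×q})`. -/
def vcol (q k : ℕ) : Matrix (Fin (k + 1) × Fin q) (Fin q) ℂ :=
  Matrix.of fun p b => if p.1.1 = 0 ∧ p.2 = b then 1 else 0

/-- `y_{0,k} = col(s_0, …, s_k)`. -/
def ycol (q : ℕ) (s : ℕ → Mq q) (k : ℕ) : Matrix (Fin (k + 1) × Fin q) (Fin q) ℂ :=
  Matrix.of fun p b => s p.1.1 p.2 b

/-- Dyukarev–Stieltjes parameters `𝔐_k`. -/
def DSM (q : ℕ) (s : ℕ → Mq q) : ℕ → Mq q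
  | 0 => (s 0)⁻¹
  | k + 1 =>
      (vcol q (k + 1))ᴴ * (Hmat q s (k + 1))⁻¹ * vcol q (k + 1) -
        (vcol q k)ᴴ * (Hmat q s k)⁻¹ * vcol q k

/-- Dyukarev–Stieltjes parameters `𝔏_k`. -/
def DSL (q : ℕ) (s : ℕ → Mq q) : ℕ → Mq q
  | 0 => s 0 * (s 1)⁻¹ * s 0
  | k + 1 =>
      (ycol q s (k + 1))ᴴ * (Kmat q s (k + 1))⁻¹ * ycol q s (k + 1) -
        (ycol q s k)ᴴ * (Kmat q s k)⁻¹ * ycol q s k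

/-- Ordered product `A_0 A_1 ⋯ A_n`. -/
def oprod {α : Type*} [Monoid α] (f : ℕ → α) (n : ℕ) : α :=
  ((List.range (n + 1)).map f).prod

/-- Block shift `T_n = (δ_{j,k+1} I_q)_{j,k=0}^n`. -/
def Tmat (q n : ℕ) : Matrix (Fin (n + 1) × Fin q) (Fin (n + 1) × Fin q) ℂ :=
  Matrix.of fun p r => if p.1.1 = r.1.1 + 1 ∧ p.2 = r.2 then 1 else 0

/-- `R_n(z) = (I_{(n+1)q} − z T_n)⁻¹`. -/
def Rmat (q n : ℕ) (z : ℂ) : Matrix (Fin (n + 1) × Fin q) (Fin (n + 1) × Fin q) ℂ :=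
  (1 - z • Tmat q n)⁻¹

/-- `u_0 = 0`, `u_n = col(0_{q×q}, −y_{0,n−1})`. -/
def ucol (q : ℕ) (s : ℕ → Mq q) (n : ℕ) : Matrix (Fin (n + 1) × Fin q) (Fin q) ℂ :=
  Matrix.of fun p b => if p.1.1 = 0 then 0 else -(s (p.1.1 - 1) p.2 b)

/-- `col(−H_n⁻¹ y_{n+1,2n+1}, I_q)` of size `(n+2)q × q`. -/
def colH (q : ℕ) (s : ℕ → Mq q) (n : ℕ) : Matrix (Fin (n + 2) × Fin q) (Fin q) ℂ :=
  Matrix.of fun p b =>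
    if h : p.1.1 < n + 1 then
      (-((Hmat q s n)⁻¹ *
          Matrix.of fun (r : Fin (n + 1) × Fin q) (c : Fin q) => s (n + 1 + r.1.1) r.2 c))
        (⟨p.1.1, h⟩, p.2) b
    else if p.2 = b then 1 else 0

/-- `col(−K_n⁻¹ y_{n+2,2n+2}, I_q)` of size `(n+2)q × q`. -/
def colK (q : ℕ) (s : ℕ → Mq q) (n : ℕ) : Matrix (Fin (n + 2) × Fin q) (Fin q) ℂ :=
  Matrix.of fun p b =>
    if h : p.1.1 < n + 1 then
      (-((Kmat q s n)⁻¹ *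
          Matrix.of fun (r : Fin (n + 1) × Fin q) (c : Fin q) => s (n + 2 + r.1.1) r.2 c))
        (⟨p.1.1, h⟩, p.2) b
    else if p.2 = b then 1 else 0

/-- `z_{0,n} = row(s_0, …, s_n)`. -/
def zrow (q : ℕ) (s : ℕ → Mq q) (n : ℕ) : Matrix (Fin q) (Fin (n + 1) × Fin q) ℂ :=
  Matrix.of fun a r => s r.1.1 a r.2

/-- Orthogonal matrix polynomials `P_n`. -/
def Ppoly (q : ℕ) (s : ℕ → Mq q) : ℕ → ℂ → Mq q
  | 0, _ => 1
  | n + 1, z => (vcol q (n + 1))ᴴ * (Rmat q (n + 1) (starRingEnd ℂ z))ᴴ * colH q s n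

/-- Second kind matrix polynomials `Q_n`. -/
def Qpoly (q : ℕ) (s : ℕ → Mq q) : ℕ → ℂ → Mq q
  | 0, _ => 0
  | n + 1, z => -((ucol q s (n + 1))ᴴ * (Rmat q (n + 1) (starRingEnd ℂ z))ᴴ * colH q s n)

/-- Matrix polynomials `P̂_n`. -/
def Phat (q : ℕ) (s : ℕ → Mq q) : ℕ → ℂ → Mq q
  | 0, _ => 1
  | n + 1, z => (vcol q (n + 1))ᴴ * (Rmat q (n + 1) (starRingEnd ℂ z))ᴴ * colK q s n

/-- Matrix polynomials `Q̂_n`. -/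
def Qhat (q : ℕ) (s : ℕ → Mq q) : ℕ → ℂ → Mq q
  | 0, _ => s 0
  | n + 1, z => zrow q s (n + 1) * (Rmat q (n + 1) (starRingEnd ℂ z))ᴴ * colK q s n

/-- `α_n(z)`. -/
def alphaP (q : ℕ) (s : ℕ → Mq q) (n : ℕ) (z : ℂ) : Mq q :=
  1 - z • ((ucol q s n)ᴴ * (Rmat q n (starRingEnd ℂ z))ᴴ * (Hmat q s n)⁻¹ * vcol q n)

/-- `γ_n(z)`. -/
def gammaP (q : ℕ) (s : ℕ → Mq q) (n : ℕ) (z : ℂ) : Mq q :=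
  -(z • ((vcol q n)ᴴ * (Rmat q n (starRingEnd ℂ z))ᴴ * (Hmat q s n)⁻¹ * vcol q n))

/-- `β_n(z)`. -/
def betaP (q : ℕ) (s : ℕ → Mq q) : ℕ → ℂ → Mq q
  | 0, _ => 0
  | n + 1, z => (ycol q s n)ᴴ * (Rmat q n (starRingEnd ℂ z))ᴴ * (Kmat q s n)⁻¹ * ycol q s n

/-- `δ_n(z)`. -/
def deltaP (q : ℕ) (s : ℕ → Mq q) : ℕ → ℂ → Mq q
  | 0, _ => 1
  | n + 1, z =>
      1 + z • ((vcol q n)ᴴ * (Rmat q n (starRingEnd ℂ z))ᴴ * (Kmat q s n)⁻¹ * ycol q s n)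

/-- The resolvent matrices `U_m(z)`. -/
def Umat (q : ℕ) (s : ℕ → Mq q) (m : ℕ) (z : ℂ) : M2q q :=
  if m % 2 = 0 then
    Matrix.fromBlocks (alphaP q s (m / 2) z) (betaP q s (m / 2) z)
      (gammaP q s (m / 2) z) (deltaP q s (m / 2) z)
  else
    Matrix.fromBlocks (alphaP q s (m / 2) z) (betaP q s (m / 2 + 1) z)
      (gammaP q s (m / 2) z) (deltaP q s (m / 2 + 1) z)

/-- `𝕄_k(z) = [[I, 0], [−z𝔐_k, I]]`. -/
def MM (q : ℕ) (s : ℕ → Mq q) (k : ℕ) (z : ℂ) : M2q q :=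
  Matrix.fromBlocks 1 0 (-(z • DSM q s k)) 1

/-- `𝕃_k = [[I, 𝔏_k], [0, I]]`. -/
def LL (q : ℕ) (s : ℕ → Mq q) (k : ℕ) : M2q q :=
  Matrix.fromBlocks 1 (DSL q s k) 0 1

/-- `𝒫_n = diag([P_n(0)]^{−*}, P_n(0))`. -/
def PPmat (q : ℕ) (s : ℕ → Mq q) (n : ℕ) : M2q q :=
  Matrix.fromBlocks (((Ppoly q s n 0)⁻¹)ᴴ) 0 0 (Ppoly q s n 0)

/-- `𝐐_n(z) = [[0, Q̂_n(0)], [−z[Q̂_n(0)]^{−*}, 0]]`. -/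
def QQgen (q : ℕ) (s : ℕ → Mq q) (n : ℕ) (z : ℂ) : M2q q :=
  Matrix.fromBlocks 0 (Qhat q s n 0) (-(z • ((Qhat q s n 0)⁻¹)ᴴ)) 0

/-- `𝐐_0^{(ℓ)}(z) = [[0, s_0^{(ℓ)}], [−z(s_0^{(ℓ)})⁻¹, 0]]`. -/
def QQ0 (q : ℕ) (s : ℕ → Mq q) (ℓ : ℕ) (z : ℂ) : M2q q :=
  Matrix.fromBlocks 0 (katetov q ℓ s 0) (-(z • (katetov q ℓ s 0)⁻¹)) 0

/-- `𝒬_m(z) = 𝐐_0^{(0)}(z) ⋯ 𝐐_0^{(m)}(z)`. -/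
def Qprod (q : ℕ) (s : ℕ → Mq q) (m : ℕ) (z : ℂ) : M2q q :=
  oprod (fun ℓ => QQ0 q s ℓ z) m

/-!
Write `P_n(z) = ∑_k z^k c_k`: the coefficients `c` of `P_n` are the unique monic solution of the
orthogonality relations `∑_k s_{j+k} c_k = 0` (`j < n`), as `H_{n-1}` is invertible; `P̂_n` is
`P_n` for the shifted sequence `(s_{j+1})`, and `Q̂_n`, `Q_n` have the second-kind coefficients
`∑_{l ≥ m} s_{l-m} d_l` of `P̂_n`, `P_n` (the latter shifted by one). Since `∑ s_j x^j` and
`∑ s^♯_j x^j` are inverse power series, `t_j = -s_0 s^♯_{j+1} s_0` satisfies Hankel–Toeplitz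
identities showing that the Hankel matrices of `t` and of `(t_{j+1})` are invertible, and that
`s_0⁻¹` times the coefficients of `Q̂_n`, resp. of `Q_{n+1}`, are monic and orthogonal for `t`,
resp. `(t_{j+1})`. Uniqueness identifies them with the coefficients of `P_n^{(1)}` and
`P̂_n^{(1)}`; one more convolution with `s^♯` gives the identities for `Q_n^{(1)}` and
`Q̂_n^{(1)}`.
-/

namespace Katetov

open Finset

variable {q : ℕ}

section Convolution

variable {R : Type*} [Ring R] {a b : ℕ → R}

lemma sum_range_mul_of_mk_mul_mk_eq_one (hab : PowerSeries.mk a * PowerSeries.mk b = 1) (m : ℕ) :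
    ∑ l ∈ range (m + 1), a l * b (m - l) = if m = 0 then 1 else 0 := by
  have h := congrArg (PowerSeries.coeff m) hab
  rw [PowerSeries.coeff_mul, Nat.sum_antidiagonal_eq_sum_range_succ_mk, PowerSeries.coeff_one]
    at h
  simpa using h

lemma sum_range_add_mul_of_mk_mul_mk_eq_one (hab : PowerSeries.mk a * PowerSeries.mk b = 1)
    (i k : ℕ) :
    ∑ m ∈ range (k + 1), a (i + m) * b (k - m) =
      (if i + k = 0 then 1 else 0) - ∑ l ∈ range i, a l * b (i + k - l) := by
  rw [← sum_range_mul_of_mk_mul_mk_eq_one hab (i + k),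
    ← sum_range_add_sum_Ico _ (show i ≤ i + k + 1 by omega), sum_Ico_eq_sum_range,
    add_sub_cancel_left, show i + k + 1 - i = k + 1 by omega]
  refine sum_congr rfl fun m _ => ?_
  rw [show i + k - (i + m) = k - m by omega]

lemma sum_Ico_mul_sum_Ico_of_mk_mul_mk_eq_one (hab : PowerSeries.mk a * PowerSeries.mk b = 1)
    {L j : ℕ} (hj : j < L) (ω : ℕ → R) :
    ∑ m ∈ Ico j L, a (m - j) * ∑ k ∈ Ico m L, b (k - m) * ω k = ω j := by
  simp only [mul_sum, ← mul_assoc]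
  rw [sum_Ico_Ico_comm, sum_eq_single_of_mem j (mem_Ico.2 ⟨le_rfl, hj⟩)]
  · have h := sum_range_mul_of_mk_mul_mk_eq_one hab 0
    simp only [zero_add, range_one, sum_singleton, Nat.sub_self, if_true] at h
    simp [h]
  · intro k hk hkj
    have hk : j < k := lt_of_le_of_ne (mem_Ico.1 hk).1 (Ne.symm hkj)
    have h := sum_range_mul_of_mk_mul_mk_eq_one hab (k - j)
    rw [if_neg (by omega)] at h
    rw [← sum_mul, sum_Ico_eq_sum_range, show k + 1 - j = k - j + 1 by omega, ← zero_mul (ω k),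
      ← h]
    congr 1
    refine sum_congr rfl fun m hm => ?_
    rw [show j + m - j = m by omega, show k - (j + m) = k - j - m by omega]

/-- The Hankel matrix of `a` annihilates the image of `ω` under the upper triangular Toeplitz
matrix of `b`, as soon as `ω` is annihilated by the Hankel matrix of `b` shifted by one. -/
lemma sum_range_mul_sum_Ico_eq_zero (hab : PowerSeries.mk a * PowerSeries.mk b = 1)
    {L i : ℕ} {ω : ℕ → R} (hω : ∀ j < i, ∑ k ∈ range L, b (j + k + 1) * ω k = 0)
    (hω0 : i = 0 → ω 0 = 0) :
    ∑ m ∈ range L, a (i + m) * ∑ k ∈ Ico m L, b (k - m) * ω k = 0 := by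
  simp only [mul_sum, ← mul_assoc]
  rw [range_eq_Ico, sum_Ico_Ico_comm]
  simp only [← sum_mul, ← range_eq_Ico]
  simp only [sum_range_add_mul_of_mk_mul_mk_eq_one hab, sub_mul, sum_sub_distrib, sum_mul]
  rw [sum_comm (s := range L)]
  have h0 : ∑ k ∈ range L, (if i + k = 0 then (1 : R) else 0) * ω k = 0 :=
    sum_eq_zero fun k _ => by
      by_cases h : i + k = 0
      · rw [if_pos h, one_mul, show k = 0 by omega, hω0 (by omega)]
      · rw [if_neg h, zero_mul]
  have h1 : ∑ l ∈ range i, ∑ k ∈ range L, a l * b (i + k - l) * ω k = 0 :=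
    sum_eq_zero fun l hl => by
      have hl : l < i := mem_range.1 hl
      simp only [mul_assoc, ← mul_sum]
      rw [← mul_zero (a l), ← hω (i - 1 - l) (by omega)]
      congr 1
      refine sum_congr rfl fun k _ => ?_
      rw [show i + k - l = i - 1 - l + k + 1 by omega]
  rw [h0, h1, sub_zero]

end Convolution

section BlockMatrices

def blockCol (N : ℕ) (g : ℕ → Mq q) : Matrix (Fin (N + 1) × Fin q) (Fin q) ℂ :=
  Matrix.of fun p b => g p.1 p.2 b

def blockRow (N : ℕ) (x : ℕ → Mq q) : Matrix (Fin q) (Fin (N + 1) × Fin q) ℂ :=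
  Matrix.of fun a p => x p.1 a p.2

def blockMat (N : ℕ) (a : ℕ → ℕ → Mq q) :
    Matrix (Fin (N + 1) × Fin q) (Fin (N + 1) × Fin q) ℂ :=
  Matrix.of fun p r => a p.1 r.1 p.2 r.2

/-- The blocks of `X`, extended by `0` beyond the last one. -/
def colBlocks {N : ℕ} (X : Matrix (Fin (N + 1) × Fin q) (Fin q) ℂ) (k : ℕ) : Mq q :=
  Matrix.of fun a b => if h : k < N + 1 then X (⟨k, h⟩, a) b else 0

lemma blockCol_colBlocks {N : ℕ} (X : Matrix (Fin (N + 1) × Fin q) (Fin q) ℂ) :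
    blockCol N (colBlocks X) = X := by
  ext p b
  rw [blockCol, Matrix.of_apply, colBlocks, Matrix.of_apply, dif_pos p.1.2]

lemma blockCol_eq_blockCol_iff {N : ℕ} {g h : ℕ → Mq q} :
    blockCol N g = blockCol N h ↔ ∀ j ≤ N, g j = h j := by
  refine ⟨fun he j hj => ?_, fun he => ?_⟩
  · ext a b
    simpa [blockCol] using congrFun (congrFun he (⟨j, by omega⟩, a)) b
  · ext p b
    simp [blockCol, he p.1 (by omega)]

lemma conjTranspose_blockCol (N : ℕ) (g : ℕ → Mq q) :
    (blockCol N g)ᴴ = blockRow N (fun j => (g j)ᴴ) := rfl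

lemma blockMat_mul_blockMat (N : ℕ) (a b : ℕ → ℕ → Mq q) :
    blockMat N a * blockMat N b =
      blockMat N (fun j k => ∑ l ∈ range (N + 1), a j l * b l k) := by
  ext p r
  simp [Matrix.mul_apply, blockMat, Fintype.sum_prod_type, Matrix.sum_apply,
    ← Fin.sum_univ_eq_sum_range]

lemma blockMat_mul_blockCol (N : ℕ) (a : ℕ → ℕ → Mq q) (g : ℕ → Mq q) :
    blockMat N a * blockCol N g = blockCol N (fun j => ∑ l ∈ range (N + 1), a j l * g l) := by
  ext p b
  simp [Matrix.mul_apply, blockMat, blockCol, Fintype.sum_prod_type, Matrix.sum_apply,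
    ← Fin.sum_univ_eq_sum_range]

lemma blockRow_mul_blockMat (N : ℕ) (x : ℕ → Mq q) (a : ℕ → ℕ → Mq q) :
    blockRow N x * blockMat N a = blockRow N (fun k => ∑ l ∈ range (N + 1), x l * a l k) := by
  ext c p
  simp [Matrix.mul_apply, blockMat, blockRow, Fintype.sum_prod_type, Matrix.sum_apply,
    ← Fin.sum_univ_eq_sum_range]

lemma blockRow_mul_blockCol (N : ℕ) (x : ℕ → Mq q) (g : ℕ → Mq q) :
    blockRow N x * blockCol N g = ∑ l ∈ range (N + 1), x l * g l := by
  ext a b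
  simp [Matrix.mul_apply, blockRow, blockCol, Fintype.sum_prod_type, Matrix.sum_apply,
    ← Fin.sum_univ_eq_sum_range]

lemma blockMat_congr {N : ℕ} {a b : ℕ → ℕ → Mq q}
    (h : ∀ j ≤ N, ∀ k ≤ N, a j k = b j k) : blockMat N a = blockMat N b := by
  ext p r
  simp [blockMat, h p.1 (by omega) r.1 (by omega)]

lemma blockMat_one (N : ℕ) :
    (1 : Matrix (Fin (N + 1) × Fin q) (Fin (N + 1) × Fin q) ℂ) =
      blockMat N (fun j k => if j = k then 1 else 0) := by
  ext ⟨j, a⟩ ⟨k, b⟩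
  by_cases h : j = k
  · subst h; simp [blockMat, Matrix.one_apply]
  · simp [blockMat, h, Fin.val_eq_val]

end BlockMatrices

section Resolvent

lemma conjTranspose_one_sub_smul_Tmat (N : ℕ) (z : ℂ) :
    (1 - starRingEnd ℂ z • Tmat q N)ᴴ =
      blockMat N (fun j k => (if j = k then 1 else 0) - if k = j + 1 then z • 1 else 0) := by
  ext ⟨j, a⟩ ⟨k, b⟩
  by_cases hjk : j = k
  · subst hjk; simp [blockMat, Tmat, Matrix.one_apply, eq_comm]
  · by_cases h : (k : ℕ) = j + 1 <;> by_cases hab : a = b <;>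
      simp [blockMat, Tmat, hjk, h, hab, Fin.val_eq_val, eq_comm]

lemma conjTranspose_Rmat (N : ℕ) (z : ℂ) :
    (Rmat q N (starRingEnd ℂ z))ᴴ =
      blockMat N (fun j k => if j ≤ k then z ^ (k - j) • 1 else 0) := by
  rw [Rmat, Matrix.conjTranspose_nonsing_inv]
  apply Matrix.inv_eq_right_inv
  rw [conjTranspose_one_sub_smul_Tmat, blockMat_mul_blockMat, blockMat_one]
  refine blockMat_congr fun j hj k hk => ?_
  simp only [sub_mul, sum_sub_distrib, ite_mul, one_mul, zero_mul, smul_mul_assoc,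
    sum_ite_eq, sum_ite_eq', mem_range]
  rw [if_pos (by omega)]
  rcases lt_trichotomy j k with h | rfl | h
  · rw [if_pos h.le, if_pos (by omega), if_pos (by omega), if_neg h.ne, smul_smul, ← pow_succ',
      show k - (j + 1) + 1 = k - j by omega, sub_self]
  · simp
  · simp [show ¬ j ≤ k by omega, show ¬ j + 1 ≤ k by omega, h.ne']

end Resolvent

section PolyEval

def polyEval (R : ℕ) (C : ℕ → Mq q) (z : ℂ) : Mq q :=
  ∑ m ∈ range R, z ^ m • C m

lemma polyEval_congr {R : ℕ} {C D : ℕ → Mq q} (h : ∀ m < R, C m = D m) (z : ℂ) :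
    polyEval R C z = polyEval R D z :=
  sum_congr rfl fun m hm => by rw [h m (mem_range.1 hm)]

lemma polyEval_succ_of_eq_zero {R : ℕ} {C : ℕ → Mq q} (h : C R = 0) (z : ℂ) :
    polyEval (R + 1) C z = polyEval R C z := by
  rw [polyEval, sum_range_succ, h, smul_zero, add_zero, polyEval]

lemma polyEval_succ (R : ℕ) (C : ℕ → Mq q) (z : ℂ) :
    polyEval (R + 1) C z = C 0 + z • polyEval R (fun m => C (m + 1)) z := by
  simp only [polyEval, sum_range_succ', pow_zero, one_smul, smul_sum, smul_smul, ← pow_succ']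
  abel

lemma mul_polyEval (A : Mq q) (R : ℕ) (C : ℕ → Mq q) (z : ℂ) :
    A * polyEval R C z = polyEval R (fun m => A * C m) z := by
  simp only [polyEval, mul_sum, mul_smul_comm]

lemma polyEval_sub (R : ℕ) (C D : ℕ → Mq q) (z : ℂ) :
    polyEval R C z - polyEval R D z = polyEval R (fun m => C m - D m) z := by
  simp only [polyEval, ← sum_sub_distrib, smul_sub]

/-- The coefficient of `z ^ m` in `∑_{l < L} ∑_{j ≤ l} z ^ (l - j) x_j d_l`: for `x = s` and
`d` the coefficients of `P̂_n` these are the coefficients of `Q̂_n`. -/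
def secondKind (L : ℕ) (x d : ℕ → Mq q) (m : ℕ) : Mq q :=
  ∑ l ∈ Ico m L, x (l - m) * d l

lemma secondKind_of_le {L m : ℕ} (h : L ≤ m) (x d : ℕ → Mq q) : secondKind L x d m = 0 := by
  rw [secondKind, Ico_eq_empty_of_le h, sum_empty]

lemma secondKind_eq_add {L m : ℕ} (h : m < L) (x d : ℕ → Mq q) :
    secondKind L x d m = x 0 * d m + ∑ l ∈ Ico (m + 1) L, x (l - m) * d l := by
  rw [secondKind, sum_eq_sum_Ico_succ_bot h, Nat.sub_self]

lemma secondKind_shift (L : ℕ) (x d : ℕ → Mq q) (m : ℕ) :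
    secondKind L x (fun l => d (l + 1)) m = secondKind (L + 1) x d (m + 1) := by
  rw [secondKind, secondKind, ← sum_Ico_add']
  exact sum_congr rfl fun l _ => by rw [Nat.add_sub_add_right]

lemma secondKind_succ_of_eq_zero (L : ℕ) {x : ℕ → Mq q} (hx : x 0 = 0) (d : ℕ → Mq q)
    (m : ℕ) :
    secondKind (L + 1) x d m = secondKind L (fun j => x (j + 1)) (fun l => d (l + 1)) m := by
  rcases lt_or_ge m (L + 1) with h | h
  · rw [secondKind_eq_add h, hx, zero_mul, zero_add, secondKind, ← sum_Ico_add']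
    refine sum_congr rfl fun l hl => ?_
    rw [show l + 1 - m = l - m + 1 by have := (mem_Ico.1 hl).1; omega]
  · rw [secondKind_of_le h, secondKind_of_le (by omega)]

lemma sum_Ico_mul_secondKind (f : ℕ → Mq q) (a L : ℕ) (x d : ℕ → Mq q) :
    ∑ k ∈ Ico a L, f k * secondKind L x d k =
      ∑ l ∈ Ico a L, (∑ k ∈ Ico a (l + 1), f k * x (l - k)) * d l := by
  simp only [secondKind, mul_sum, sum_mul, mul_assoc]
  exact sum_Ico_Ico_comm a L _

lemma blockRow_mul_conjTranspose_Rmat_mul_blockCol (N : ℕ) (x g : ℕ → Mq q) (z : ℂ) :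
    blockRow N x * (Rmat q N (starRingEnd ℂ z))ᴴ * blockCol N g =
      polyEval (N + 1) (secondKind (N + 1) x g) z := by
  rw [conjTranspose_Rmat, blockRow_mul_blockMat, blockRow_mul_blockCol, polyEval]
  simp only [secondKind, smul_sum, range_eq_Ico, sum_Ico_Ico_comm, sum_mul]
  refine sum_congr rfl fun l hl => ?_
  have hl : l < N + 1 := (mem_Ico.1 hl).2
  simp only [mul_ite, mul_zero, mul_smul_comm, mul_one]
  rw [← sum_mul, ← sum_filter, show (Ico 0 (N + 1)).filter (· ≤ l) = Ico 0 (l + 1) by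
    ext; simp; omega, ← range_eq_Ico, ← sum_range_reflect, sum_mul]
  refine sum_congr rfl fun i hi => ?_
  have hi : i < l + 1 := mem_range.1 hi
  rw [smul_mul_assoc, show l + 1 - 1 - i = l - i by omega, show l - (l - i) = i by omega]

end PolyEval

section OrthogonalPolynomials

variable (s : ℕ → Mq q)

def orthCoeff : ℕ → ℕ → Mq q
  | 0 => Pi.single 0 1
  | n + 1 => colBlocks (colH q s n)

lemma orthCoeff_self (n : ℕ) : orthCoeff s n n = 1 := by
  cases n with
  | zero => simp [orthCoeff]
  | succ n => ext a b; simp [orthCoeff, colBlocks, colH, Matrix.one_apply]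

lemma orthCoeff_of_lt {n k : ℕ} (h : n < k) : orthCoeff s n k = 0 := by
  cases n with
  | zero => simp [orthCoeff, show k ≠ 0 by omega]
  | succ n => ext a b; simp [orthCoeff, colBlocks, show ¬ k < n + 2 by omega]

lemma blockCol_orthCoeff (n : ℕ) :
    blockCol n (orthCoeff s (n + 1)) =
      -((Hmat q s n)⁻¹ * blockCol n (fun j => s (n + 1 + j))) := by
  ext p b
  simp only [blockCol, orthCoeff, colBlocks, colH, Matrix.of_apply,
    dif_pos (show (p.1 : ℕ) < n + 2 by omega), dif_pos p.1.2]

lemma Hmat_mul_blockCol_eq_iff {n : ℕ} {d : ℕ → Mq q} (hd : d (n + 1) = 1) :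
    Hmat q s n * blockCol n d = -blockCol n (fun j => s (n + 1 + j)) ↔
      ∀ j ≤ n, ∑ k ∈ range (n + 2), s (j + k) * d k = 0 := by
  rw [show Hmat q s n = blockMat n (fun j k => s (j + k)) from rfl, blockMat_mul_blockCol,
    show -blockCol n (fun j => s (n + 1 + j)) = blockCol n (fun j => -s (n + 1 + j)) from rfl,
    blockCol_eq_blockCol_iff]
  refine forall₂_congr fun j _ => ?_
  rw [sum_range_succ _ (n + 1), hd, mul_one, add_eq_zero_iff_eq_neg, add_comm (n + 1) j]

lemma sum_mul_orthCoeff (hH : ∀ k, IsUnit (Hmat q s k).det) {n : ℕ} :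
    ∀ j < n, ∑ k ∈ range (n + 1), s (j + k) * orthCoeff s n k = 0 := by
  cases n with
  | zero => intro j hj; omega
  | succ n =>
    intro j hj
    refine (Hmat_mul_blockCol_eq_iff s (orthCoeff_self s (n + 1))).1 ?_ j (by omega)
    rw [blockCol_orthCoeff, Matrix.mul_neg, ← Matrix.mul_assoc, Matrix.mul_nonsing_inv _ (hH n),
      Matrix.one_mul]

lemma eq_orthCoeff (hH : ∀ k, IsUnit (Hmat q s k).det) {n : ℕ} {d : ℕ → Mq q}
    (hd_self : d n = 1) (hd_zero : ∀ k, n < k → d k = 0)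
    (hd : ∀ j < n, ∑ k ∈ range (n + 1), s (j + k) * d k = 0) : d = orthCoeff s n := by
  funext k
  rcases lt_trichotomy k n with hk | rfl | hk
  · cases n with
    | zero => omega
    | succ n =>
      have hcol := (Hmat_mul_blockCol_eq_iff s hd_self).2 fun j hj => hd j (by omega)
      have : blockCol n d = blockCol n (orthCoeff s (n + 1)) := by
        rw [blockCol_orthCoeff, ← Matrix.mul_neg, ← hcol, ← Matrix.mul_assoc,
          Matrix.nonsing_inv_mul _ (hH n), Matrix.one_mul]
      exact blockCol_eq_blockCol_iff.1 this k (by omega)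
  · rw [hd_self, orthCoeff_self]
  · rw [hd_zero k hk, orthCoeff_of_lt s hk]

lemma Ppoly_eq_polyEval (n : ℕ) (z : ℂ) :
    Ppoly q s n z = polyEval (n + 1) (orthCoeff s n) z := by
  cases n with
  | zero => simp [Ppoly, polyEval, orthCoeff]
  | succ n =>
    have hv : vcol q (n + 1) = blockCol (n + 1) (Pi.single 0 1) := by
      ext ⟨⟨j, hj⟩, a⟩ b
      rcases j with _ | j <;> simp [vcol, blockCol, Matrix.one_apply]
    rw [Ppoly, hv, conjTranspose_blockCol, ← blockCol_colBlocks (colH q s n),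
      blockRow_mul_conjTranspose_Rmat_mul_blockCol]
    refine polyEval_congr (fun m hm => ?_) z
    rw [secondKind_eq_add hm, sum_eq_zero fun l hl => ?_]
    · simp [orthCoeff]
    · simp [show l - m ≠ 0 by have := (mem_Ico.1 hl).1; omega]

lemma colK_eq_colH_shift (n : ℕ) : colK q s n = colH q (fun j => s (j + 1)) n := by
  ext p b
  simp only [colK, colH, Hmat, Kmat,
    show ∀ r : ℕ, n + 2 + r = n + 1 + r + 1 from fun r => by omega]

lemma Phat_eq_Ppoly_shift (n : ℕ) (z : ℂ) :
    Phat q s n z = Ppoly q (fun j => s (j + 1)) n z := by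
  cases n with
  | zero => rfl
  | succ n => rw [Phat, Ppoly, colK_eq_colH_shift]

lemma Qhat_eq_polyEval (n : ℕ) (z : ℂ) :
    Qhat q s n z =
      polyEval (n + 1) (secondKind (n + 1) s (orthCoeff (fun j => s (j + 1)) n)) z := by
  cases n with
  | zero => simp [Qhat, polyEval, secondKind, orthCoeff]
  | succ n =>
    rw [Qhat, colK_eq_colH_shift, ← blockCol_colBlocks (colH q _ n)]
    exact blockRow_mul_conjTranspose_Rmat_mul_blockCol (n + 1) s _ z

lemma Qpoly_eq_polyEval (n : ℕ) (z : ℂ) :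
    Qpoly q s n z =
      polyEval n (secondKind n (fun j => (s j)ᴴ) (fun k => orthCoeff s n (k + 1))) z := by
  cases n with
  | zero => simp [Qpoly, polyEval]
  | succ n =>
    have hu : ucol q s (n + 1) = blockCol (n + 1) (fun j => if j = 0 then 0 else -s (j - 1)) := by
      ext ⟨⟨j, hj⟩, a⟩ b
      rcases j with _ | j <;> simp [ucol, blockCol]
    rw [Qpoly, hu, conjTranspose_blockCol, ← blockCol_colBlocks (colH q s n),
      blockRow_mul_conjTranspose_Rmat_mul_blockCol,
      ← polyEval_succ_of_eq_zero (R := n + 1) (secondKind_of_le le_rfl _ _)]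
    simp only [polyEval, ← sum_neg_distrib, ← smul_neg]
    refine sum_congr rfl fun m _ => ?_
    rw [secondKind_succ_of_eq_zero _ (by simp)]
    simp [secondKind, orthCoeff, sum_neg_distrib]

end OrthogonalPolynomials

section Reciprocal

variable (s : ℕ → Mq q)

lemma reciprocal_zero : reciprocal q s 0 = (s 0)⁻¹ := by
  rw [reciprocal]

lemma reciprocal_succ (j : ℕ) :
    reciprocal q s (j + 1) =
      -(s 0)⁻¹ * ∑ l ∈ range (j + 1), s (j + 1 - l) * reciprocal q s l := by
  rw [reciprocal, sum_attach (range (j + 1)) fun l => s (j + 1 - l) * reciprocal q s l]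

lemma mk_mul_mk_reciprocal (h0 : IsUnit (s 0).det) :
    PowerSeries.mk s * PowerSeries.mk (reciprocal q s) = 1 := by
  refine PowerSeries.ext fun m => ?_
  rw [PowerSeries.coeff_mul, Nat.sum_antidiagonal_eq_sum_range_succ_mk, PowerSeries.coeff_one]
  simp only [PowerSeries.coeff_mk]
  cases m with
  | zero => simp [reciprocal_zero, Matrix.mul_nonsing_inv _ h0]
  | succ m =>
    rw [if_neg m.succ_ne_zero, ← sum_range_reflect, sum_range_succ]
    simp only [Nat.succ_sub_one, Nat.sub_self, Nat.sub_zero]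
    rw [reciprocal_succ s m, ← mul_assoc, mul_neg, Matrix.mul_nonsing_inv _ h0, neg_one_mul,
      add_neg_eq_zero]
    refine sum_congr rfl fun l hl => ?_
    rw [show m + 1 - (m + 1 - l) = l by have := mem_range.1 hl; omega]

lemma mk_reciprocal_mul_mk (h0 : IsUnit (s 0).det) :
    PowerSeries.mk (reciprocal q s) * PowerSeries.mk s = 1 := by
  have h0' : IsUnit (reciprocal q s 0).det := by
    rw [reciprocal_zero, Matrix.det_nonsing_inv]
    exact isUnit_ringInverse.mpr h0
  have h := mk_mul_mk_reciprocal _ h0'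
  rwa [left_inv_eq_right_inv (mk_mul_mk_reciprocal s h0) h]

lemma conjTranspose_reciprocal (h0 : IsUnit (s 0).det) (hs : ∀ j, (s j)ᴴ = s j) (j : ℕ) :
    (reciprocal q s j)ᴴ = reciprocal q s j := by
  have h : PowerSeries.mk (fun j => (reciprocal q s j)ᴴ) * PowerSeries.mk s = 1 := by
    refine PowerSeries.ext fun m => ?_
    have hm := congrArg (fun A => Aᴴ) (congrArg (PowerSeries.coeff m) (mk_mul_mk_reciprocal s h0))
    simp only [PowerSeries.coeff_mul, PowerSeries.coeff_mk, PowerSeries.coeff_one,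
      Matrix.conjTranspose_sum, Matrix.conjTranspose_mul, hs] at hm ⊢
    rw [← Nat.sum_antidiagonal_swap] at hm
    split_ifs at hm ⊢ <;> simpa using hm
  have := congrArg (PowerSeries.coeff j)
    (left_inv_eq_right_inv h (mk_mul_mk_reciprocal s h0))
  simpa using this

end Reciprocal

section HankelDeterminants

lemma isUnit_det_blockMat_of_forall_eq_zero {N : ℕ} (f : ℕ → ℕ → Mq q)
    (h : ∀ w : ℕ → Mq q,
      (∀ j ≤ N, ∑ k ∈ range (N + 1), f j k * w k = 0) → ∀ k ≤ N, w k = 0) :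
    IsUnit (blockMat N f).det := by
  refine isUnit_iff_ne_zero.2 fun hdet => ?_
  obtain ⟨v, hv, hfv⟩ := Matrix.exists_mulVec_eq_zero_iff.2 hdet
  set X := Matrix.replicateCol (Fin q) v
  have hX : blockMat N f * blockCol N (colBlocks X) = 0 := by
    rw [blockCol_colBlocks, ← Matrix.replicateCol_mulVec, hfv]
    rfl
  rw [blockMat_mul_blockCol, show (0 : Matrix (Fin (N + 1) × Fin q) (Fin q) ℂ) =
    blockCol N (fun _ => 0) from rfl, blockCol_eq_blockCol_iff] at hX
  have hzero := h _ hX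
  refine hv (funext fun p => ?_)
  have := congrFun (congrFun (hzero p.1 (by omega)) p.2) p.2
  simpa [colBlocks, X, dif_pos p.1.2] using this

lemma eq_zero_of_isUnit_det_Hmat {s : ℕ → Mq q} {N : ℕ} (hH : IsUnit (Hmat q s N).det)
    {w : ℕ → Mq q} (hw : ∀ j ≤ N, ∑ k ∈ range (N + 1), s (j + k) * w k = 0) :
    ∀ k ≤ N, w k = 0 := by
  have hHw : Hmat q s N * blockCol N w = 0 := by
    rw [show Hmat q s N = blockMat N (fun j k => s (j + k)) from rfl, blockMat_mul_blockCol,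
      show (0 : Matrix (Fin (N + 1) × Fin q) (Fin q) ℂ) = blockCol N (fun _ => 0) from rfl,
      blockCol_eq_blockCol_iff]
    exact hw
  have : blockCol N w = blockCol N (fun _ => 0) := by
    rw [← Matrix.nonsing_inv_mul_cancel_left _ (blockCol N w) hH, hHw, Matrix.mul_zero]
    rfl
  exact blockCol_eq_blockCol_iff.1 this

lemma conjTranspose_eq_of_isStieltjesPD {s : ℕ → Mq q} (hs : IsStieltjesPD q s) (m : ℕ) :
    (s m)ᴴ = s m := by
  ext a b
  have h := congrFun (congrFun (hs m).1.isHermitian ((Fin.last m), a)) ((0 : Fin (m + 1)), b)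
  simpa [Hmat] using h

lemma isUnit_det_zero_of_isUnit_det_Hmat {s : ℕ → Mq q} (hH : IsUnit (Hmat q s 0).det) :
    IsUnit (s 0).det := by
  let e : Fin q ≃ Fin 1 × Fin q := (Equiv.uniqueProd (Fin q) (Fin 1)).symm
  rwa [← Matrix.det_submatrix_equiv_self e, show (Hmat q s 0).submatrix e e = s 0 by
    ext a b; simp [Hmat, e]] at hH

end HankelDeterminants

section KatetovTransform

variable (s : ℕ → Mq q)

lemma katetov1_mul (j : ℕ) (A : Mq q) :
    katetov1 q s j * A = -(s 0 * (reciprocal q s (j + 1) * (s 0 * A))) := by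
  simp only [katetov1, neg_mul, mul_assoc]

lemma katetov1_mul_inv_mul (h0 : IsUnit (s 0).det) (j : ℕ) (A : Mq q) :
    katetov1 q s j * ((s 0)⁻¹ * A) = -(s 0 * (reciprocal q s (j + 1) * A)) := by
  rw [katetov1_mul, Matrix.mul_nonsing_inv_cancel_left _ _ h0]

lemma conjTranspose_katetov1 (h0 : IsUnit (s 0).det) (hs : ∀ j, (s j)ᴴ = s j) (j : ℕ) :
    (katetov1 q s j)ᴴ = katetov1 q s j := by
  simp only [katetov1, Matrix.conjTranspose_mul, Matrix.conjTranspose_neg, hs,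
    conjTranspose_reciprocal s h0 hs, neg_mul, mul_assoc]

lemma sum_reciprocal_mul_eq_zero_of_sum_katetov1_mul_eq_zero (h0 : IsUnit (s 0).det)
    {b L : ℕ} {w : ℕ → Mq q} (hw : ∑ k ∈ range L, katetov1 q s (b + k) * w k = 0) :
    ∑ k ∈ range L, reciprocal q s (b + k + 1) * (s 0 * w k) = 0 := by
  simp only [katetov1_mul, sum_neg_distrib, neg_eq_zero, ← mul_sum] at hw
  exact ((Matrix.isUnit_iff_isUnit_det _).2 h0).mul_right_eq_zero.1 hw

/-- A kernel vector `w` yields the kernel vector `U (s₀ w)` of `K_N`, where `U` is the upper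
triangular block Toeplitz matrix of `s^♯`, which is inverted by that of `s`. -/
lemma isUnit_det_Hmat_katetov1 (h0 : IsUnit (s 0).det) {N : ℕ}
    (hK : IsUnit (Hmat q (fun j => s (j + 1)) N).det) :
    IsUnit (Hmat q (katetov1 q s) N).det := by
  have hsr := mk_mul_mk_reciprocal s h0
  refine isUnit_det_blockMat_of_forall_eq_zero (fun j k => katetov1 q s (j + k))
    fun w hw k hk => ?_
  set ω : ℕ → Mq q := fun k => s 0 * w k
  have hω : ∀ j ≤ N, ∑ k ∈ range (N + 1), reciprocal q s (j + k + 1) * ω k = 0 :=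
    fun j hj => sum_reciprocal_mul_eq_zero_of_sum_katetov1_mul_eq_zero s h0 (hw j hj)
  have hv := eq_zero_of_isUnit_det_Hmat hK fun j hj => by
    simpa only [add_right_comm j _ 1] using sum_range_mul_sum_Ico_eq_zero hsr (i := j + 1)
      (fun j' hj' => hω j' (by omega)) (by omega)
  have hωk := sum_Ico_mul_sum_Ico_of_mk_mul_mk_eq_one hsr (show k < N + 1 by omega) ω
  rw [sum_eq_zero fun m hm => by rw [hv m (by have := (mem_Ico.1 hm).2; omega), mul_zero]] at hωk
  exact ((Matrix.isUnit_iff_isUnit_det _).2 h0).mul_right_eq_zero.1 hωk.symm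

/-- As in `isUnit_det_Hmat_katetov1`, with `H_{N+1}` in place of `K_N` and a zero block put in
front of `s₀ w`. -/
lemma isUnit_det_Hmat_shift_katetov1 (h0 : IsUnit (s 0).det) {N : ℕ}
    (hH : IsUnit (Hmat q s (N + 1)).det) :
    IsUnit (Hmat q (fun j => katetov1 q s (j + 1)) N).det := by
  have hsr := mk_mul_mk_reciprocal s h0
  refine isUnit_det_blockMat_of_forall_eq_zero (fun j k => katetov1 q s (j + k + 1))
    fun w hw k hk => ?_
  set ω : ℕ → Mq q := fun k => if k = 0 then 0 else s 0 * w (k - 1)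
  have hω : ∀ j ≤ N, ∑ k ∈ range (N + 2), reciprocal q s (j + k + 1) * ω k = 0 := by
    intro j hj
    have h := sum_reciprocal_mul_eq_zero_of_sum_katetov1_mul_eq_zero s h0 (b := j + 1)
      (by simpa only [add_right_comm j _ 1] using hw j hj)
    rw [sum_range_succ']
    simp only [ω, if_true, mul_zero, add_zero, Nat.add_sub_cancel, Nat.succ_ne_zero, if_false]
    rw [← h]
    exact sum_congr rfl fun k _ => by rw [show j + (k + 1) + 1 = j + 1 + k + 1 by omega]
  have hv := eq_zero_of_isUnit_det_Hmat hH fun i hi =>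
    sum_range_mul_sum_Ico_eq_zero hsr (fun j hj => hω j (by omega)) fun _ => if_pos rfl
  have hωk := sum_Ico_mul_sum_Ico_of_mk_mul_mk_eq_one hsr (show k + 1 < N + 2 by omega) ω
  rw [sum_eq_zero fun m hm => by rw [hv m (by have := (mem_Ico.1 hm).2; omega), mul_zero]] at hωk
  simpa [ω] using ((Matrix.isUnit_iff_isUnit_det _).2 h0).mul_right_eq_zero.1 hωk.symm

end KatetovTransform

section TransformedPolynomials

variable (s : ℕ → Mq q)

lemma sum_katetov1_mul_secondKind (h0 : IsUnit (s 0).det) (b L : ℕ) (d : ℕ → Mq q) :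
    ∑ k ∈ range L, katetov1 q s (b + k) * ((s 0)⁻¹ * secondKind L s d k) =
      s 0 * ∑ i ∈ range (b + 1),
        reciprocal q s i * ∑ l ∈ range L, s (b + 1 + l - i) * d l := by
  have hrs := mk_reciprocal_mul_mk s h0
  simp only [katetov1_mul_inv_mul s h0, sum_neg_distrib, ← mul_sum]
  have inner : ∀ l, ∑ k ∈ range (l + 1), reciprocal q s (b + k + 1) * s (l - k) =
      -∑ i ∈ range (b + 1), reciprocal q s i * s (b + 1 + l - i) := fun l => by
    simpa only [add_right_comm b _ 1, if_neg (by omega : b + 1 + l ≠ 0), zero_sub] using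
      sum_range_add_mul_of_mk_mul_mk_eq_one hrs (b + 1) l
  rw [range_eq_Ico, sum_Ico_mul_secondKind, ← mul_neg]
  congr 1
  simp only [← range_eq_Ico, inner, neg_mul, sum_neg_distrib, neg_neg, sum_mul, mul_sum,
    mul_assoc]
  exact sum_comm

lemma sum_Ico_katetov1_mul_secondKind (h0 : IsUnit (s 0).det) (m L : ℕ) (d : ℕ → Mq q) :
    ∑ k ∈ Ico (m + 1) L, katetov1 q s (k - (m + 1)) * ((s 0)⁻¹ * secondKind L s d k) =
      ∑ l ∈ Ico (m + 1) L, s (l - m) * d l := by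
  have hrs := mk_reciprocal_mul_mk s h0
  have inner : ∀ l ∈ Ico (m + 1) L,
      ∑ k ∈ Ico (m + 1) (l + 1), reciprocal q s (k - (m + 1) + 1) * s (l - k) =
        -((s 0)⁻¹ * s (l - m)) := fun l hl => by
    have hl : m + 1 ≤ l := (mem_Ico.1 hl).1
    have h := sum_range_add_mul_of_mk_mul_mk_eq_one hrs 1 (l - (m + 1))
    rw [if_neg (by omega), zero_sub, sum_range_one, show 1 + (l - (m + 1)) - 0 = l - m by omega,
      show l - (m + 1) + 1 = l + 1 - (m + 1) by omega, reciprocal_zero] at h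
    rw [sum_Ico_eq_sum_range, ← h]
    refine sum_congr rfl fun k hk => ?_
    rw [show m + 1 + k - (m + 1) + 1 = 1 + k by omega,
      show l - (m + 1 + k) = l - (m + 1) - k by omega]
  simp only [katetov1_mul_inv_mul s h0, sum_neg_distrib, ← mul_sum]
  rw [sum_Ico_mul_secondKind, sum_congr rfl fun l hl => by rw [inner l hl], ← mul_neg]
  simp only [neg_mul, sum_neg_distrib, neg_neg, ← mul_sum, mul_assoc,
    Matrix.mul_nonsing_inv_cancel_left _ _ h0]

lemma inv_mul_secondKind_self (h0 : IsUnit (s 0).det) {n : ℕ} {d : ℕ → Mq q} (hd : d n = 1) :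
    (s 0)⁻¹ * secondKind (n + 1) s d n = 1 := by
  rw [secondKind_eq_add n.lt_succ_self, Ico_self, sum_empty, add_zero, hd, mul_one,
    Matrix.nonsing_inv_mul _ h0]

lemma orthCoeff_katetov1 (h0 : IsUnit (s 0).det)
    (hK : ∀ n, IsUnit (Hmat q (fun j => s (j + 1)) n).det) (n : ℕ) :
    orthCoeff (katetov1 q s) n =
      fun k => (s 0)⁻¹ * secondKind (n + 1) s (orthCoeff (fun j => s (j + 1)) n) k := by
  symm
  refine eq_orthCoeff _ (fun N => isUnit_det_Hmat_katetov1 s h0 (hK N))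
    (inv_mul_secondKind_self s h0 (orthCoeff_self _ n))
    (fun k hk => by rw [secondKind_of_le (by omega), Matrix.mul_zero]) fun j hj => ?_
  rw [sum_katetov1_mul_secondKind s h0, sum_eq_zero fun i hi => ?_, Matrix.mul_zero]
  have hi : i < j + 1 := mem_range.1 hi
  rw [← mul_zero (reciprocal q s i), ← sum_mul_orthCoeff _ hK (n := n) (j - i) (by omega)]
  exact congrArg _ (sum_congr rfl fun l _ => by rw [show j + 1 + l - i = j - i + l + 1 by omega])

lemma orthCoeff_shift_katetov1 (h0 : IsUnit (s 0).det) (hH : ∀ n, IsUnit (Hmat q s n).det)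
    (n : ℕ) :
    orthCoeff (fun j => katetov1 q s (j + 1)) n =
      fun k => (s 0)⁻¹ * secondKind (n + 1) s (fun l => orthCoeff s (n + 1) (l + 1)) k := by
  symm
  refine eq_orthCoeff _ (fun N => isUnit_det_Hmat_shift_katetov1 s h0 (hH (N + 1)))
    (inv_mul_secondKind_self s h0 (orthCoeff_self _ (n + 1)))
    (fun k hk => by rw [secondKind_of_le (by omega), Matrix.mul_zero]) fun j hj => ?_
  -- orthogonality of `P_{n+1}` leaves only its constant coefficient, which `s^♯ s = 1` kills
  have inner : ∀ i ∈ range (j + 1 + 1), ∑ l ∈ range (n + 1),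
      s (j + 1 + 1 + l - i) * orthCoeff s (n + 1) (l + 1) =
        -(s (j + 1 - i) * orthCoeff s (n + 1) 0) :=
    fun i hi => by
      have h := sum_mul_orthCoeff s hH (n := n + 1) (j + 1 - i) (by omega)
      rw [sum_range_succ', add_zero, add_eq_zero_iff_eq_neg] at h
      rw [← h]
      refine sum_congr rfl fun l _ => ?_
      rw [show j + 1 + 1 + l - i = j + 1 - i + (l + 1) by have := mem_range.1 hi; omega]
  have hrs := sum_range_mul_of_mk_mul_mk_eq_one (mk_reciprocal_mul_mk s h0) (j + 1)
  rw [if_neg (by omega)] at hrs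
  simp only [add_right_comm j _ 1]
  rw [sum_katetov1_mul_secondKind s h0, sum_congr rfl fun i hi => by rw [inner i hi]]
  simp only [mul_neg, sum_neg_distrib, ← mul_assoc, ← sum_mul, hrs, zero_mul, neg_zero,
    Matrix.mul_zero]

lemma Ppoly_katetov1 (h0 : IsUnit (s 0).det)
    (hK : ∀ n, IsUnit (Hmat q (fun j => s (j + 1)) n).det) (n : ℕ) (z : ℂ) :
    Ppoly q (katetov1 q s) n z = (s 0)⁻¹ * Qhat q s n z := by
  rw [Ppoly_eq_polyEval, orthCoeff_katetov1 s h0 hK, Qhat_eq_polyEval, mul_polyEval]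

lemma Qpoly_katetov1 (h0 : IsUnit (s 0).det) (hs : ∀ j, (s j)ᴴ = s j)
    (hK : ∀ n, IsUnit (Hmat q (fun j => s (j + 1)) n).det) (n : ℕ) (z : ℂ) :
    Qpoly q (katetov1 q s) n z = Qhat q s n z - s 0 * Phat q s n z := by
  rw [Qpoly_eq_polyEval, Qhat_eq_polyEval, Phat_eq_Ppoly_shift, Ppoly_eq_polyEval, mul_polyEval,
    polyEval_sub, ← polyEval_succ_of_eq_zero (R := n)]
  · refine polyEval_congr (fun m hm => ?_) z
    simp only [conjTranspose_katetov1 s h0 hs]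
    rw [secondKind_shift, orthCoeff_katetov1 s h0 hK, secondKind,
      sum_Ico_katetov1_mul_secondKind s h0, secondKind_eq_add hm, add_sub_cancel_left]
  · exact secondKind_of_le le_rfl _ _

lemma Phat_katetov1 (h0 : IsUnit (s 0).det) (hs : ∀ j, (s j)ᴴ = s j)
    (hH : ∀ n, IsUnit (Hmat q s n).det) (n : ℕ) (z : ℂ) :
    Phat q (katetov1 q s) n z = (s 0)⁻¹ * Qpoly q s (n + 1) z := by
  rw [Phat_eq_Ppoly_shift, Ppoly_eq_polyEval, orthCoeff_shift_katetov1 s h0 hH, Qpoly_eq_polyEval,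
    mul_polyEval]
  simp only [hs]

lemma Qhat_katetov1 (h0 : IsUnit (s 0).det) (hs : ∀ j, (s j)ᴴ = s j)
    (hH : ∀ n, IsUnit (Hmat q s n).det) (n : ℕ) (z : ℂ) :
    Qhat q (katetov1 q s) n z = z • Qpoly q s (n + 1) z - s 0 * Ppoly q s (n + 1) z := by
  set c := orthCoeff s (n + 1)
  have hc0 : secondKind (n + 2) s c 0 = 0 := by
    simpa [secondKind] using sum_mul_orthCoeff s hH (n := n + 1) 0 (by omega)
  have hzQ : z • Qpoly q s (n + 1) z = polyEval (n + 2) (secondKind (n + 2) s c) z := by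
    rw [Qpoly_eq_polyEval, polyEval_succ (n + 1) (secondKind (n + 2) s c), hc0, zero_add]
    congr 2
    funext m
    simp only [hs]
    exact secondKind_shift _ _ _ m
  rw [hzQ, Qhat_eq_polyEval, orthCoeff_shift_katetov1 s h0 hH, Ppoly_eq_polyEval, mul_polyEval,
    polyEval_sub, ← polyEval_succ_of_eq_zero (R := n + 1)]
  · refine polyEval_congr (fun m hm => ?_) z
    simp only [secondKind_shift]
    refine (secondKind_shift (n + 1) _ (fun k => (s 0)⁻¹ * secondKind (n + 2) s c k) m).trans ?_
    rw [secondKind, sum_Ico_katetov1_mul_secondKind s h0, secondKind_eq_add hm, add_sub_cancel_left]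
  · exact secondKind_of_le le_rfl _ _

end TransformedPolynomials

end Katetov

theorem stmt18_general (q : ℕ) (s : ℕ → Mq q) (hs : IsStieltjesPD q s) (n : ℕ) (hn : 1 ≤ n) (z : ℂ) :
    Ppoly q (katetov q 1 s) n z = (s 0)⁻¹ * Qhat q s n z ∧
      Qpoly q (katetov q 1 s) n z = Qhat q s n z - s 0 * Phat q s n z ∧
      Phat q (katetov q 1 s) (n - 1) z = (s 0)⁻¹ * Qpoly q s n z ∧
      Qhat q (katetov q 1 s) (n - 1) z = z • Qpoly q s n z - s 0 * Ppoly q s n z := by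
  have hH (k : ℕ) : IsUnit (Hmat q s k).det := (hs k).1.det_pos.ne'.isUnit
  have hK (k : ℕ) : IsUnit (Hmat q (fun j => s (j + 1)) k).det := (hs k).2.det_pos.ne'.isUnit
  have h0 := Katetov.isUnit_det_zero_of_isUnit_det_Hmat (hH 0)
  have hherm := Katetov.conjTranspose_eq_of_isStieltjesPD hs
  obtain ⟨m, rfl⟩ : ∃ m, n = m + 1 := ⟨n - 1, by omega⟩
  rw [katetov, Function.iterate_one, Nat.add_sub_cancel]
  exact ⟨Katetov.Ppoly_katetov1 s h0 hK _ z, Katetov.Qpoly_katetov1 s h0 hherm hK _ z,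
    Katetov.Phat_katetov1 s h0 hherm hH m z, Katetov.Qhat_katetov1 s h0 hherm hH m z⟩

/-- Relations between the polynomials of the first Kátětov transform and those of the
original sequence. -/
theorem stmt18 (q : ℕ) (hq : 1 ≤ q) (s : ℕ → Mq q) (hs : IsStieltjesPD q s) (n : ℕ) (hn : 1 ≤ n) (z : ℂ) :
    Ppoly q (katetov q 1 s) n z = (s 0)⁻¹ * Qhat q s n z ∧
      Qpoly q (katetov q 1 s) n z = Qhat q s n z - s 0 * Phat q s n z ∧
      Phat q (katetov q 1 s) (n - 1) z = (s 0)⁻¹ * Qpoly q s n z ∧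
      Qhat q (katetov q 1 s) (n - 1) z = z • Qpoly q s n z - s 0 * Ppoly q s n z :=
  stmt18_general q s hs n hn z

end
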